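/- Let (λ_k, x_k, v_k) be generated by the fully implicit scheme with arbitrary step sizes α_k > 0: θ_k(λ_{k+1} − λ_k)/α_k = A v_{k+1} − b; (x_{k+1} − x_k)/α_k = v_{k+1} − x_{k+1}; γ_k(v_{k+1} − v_k)/α_k = μ_β(x_{k+1} − v_{k+1}) − (ξ_{k+1} + Aᵀλ_{k+1}) with ξ_{k+1} ∈ ∂f_β(x_{k+1}) + N_X(x_{k+1}), x₀ ∈ X, v₀ ∈ ℝⁿ, θ_{k+1} = θ_k/(1+α_k), γ_{k+1} = (γ_k + μ_β α_k)/(1+α_k), θ₀ = 1, γ₀ > 0. Set E_k = L_β(x_k, λ*) − L_β(x*, λ_k) + (γ_k/2)‖v_k − x*‖² + (θ_k/2)‖λ_k − λ*‖² and R₀ = √(2E₀) + ‖λ₀ − λ*‖ + ‖Ax₀ − b‖. Then for all k: ‖Ax_k − b‖ ≤ θ_k R₀; 0 ≤ L(x_k, λ*) − L(x*, λ_k) ≤ θ_k E₀; and |f(x_k) − f(x*)| ≤ θ_k (E₀ + R₀‖λ*‖), where θ_k = ∏_{i=0}^{k−1} 1/(1+α_i) and L(x,λ) = f(x) + δ_X(x)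 + ⟨λ, Ax − b⟩. -/

import Mathlib

open scoped RealInnerProductSpace Pointwise

/-- The smallest singular value of a linear map between Euclidean spaces. -/
noncomputable def sigmaMin {n m : ℕ}
    (A : EuclideanSpace ℝ (Fin n) →L[ℝ] EuclideanSpace ℝ (Fin m)) : ℝ :=
  sInf {c : ℝ | ∃ x : EuclideanSpace ℝ (Fin n), ‖x‖ = 1 ∧ ‖A x‖ = c}

/-- The convex subdifferential. -/
def subdiff {n : ℕ} (f : EuclideanSpace ℝ (Fin n) → ℝ)
    (x : EuclideanSpace ℝ (Fin n)) : Set (EuclideanSpace ℝ (Fin n)) :=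
  {p | ∀ y, f x + ⟪p, y - x⟫ ≤ f y}

/-- The normal cone of `X` at `x` (empty if `x ∉ X`). -/
def normalCone {n : ℕ} (X : Set (EuclideanSpace ℝ (Fin n)))
    (x : EuclideanSpace ℝ (Fin n)) : Set (EuclideanSpace ℝ (Fin n)) :=
  {p | x ∈ X ∧ ∀ z ∈ X, ⟪p, z - x⟫ ≤ 0}

/-!
The energy `E_k = L_β(x_k, λ*) - L_β(x*, λ_k) + γ_k/2 ‖v_k - x*‖² + θ_k/2 ‖λ_k - λ*‖²` satisfies
`(1 + α_k) E_{k+1} ≤ E_k`, hence `E_k ≤ θ_k E_0`. To see this, test the `μ_β`-strong convexity of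
`L_β(·, λ*) + δ_X` at `x_{k+1}` (its subgradient is `ξ_{k+1} + Aᵀλ*`) against `x_k` and against `x*`,
and add the second inequality `α_k` times: the primal update collapses the inner products into
`-α_k ⟪ξ_{k+1} + Aᵀλ*, v_{k+1} - x*⟫`. The `v`- and `λ`-updates rewrite this as three terms
`⟪a - b, b - c⟫`, and expanding them by polarization leaves nonpositive squares once
`θ_{k+1}, γ_{k+1}` absorb the factor `1 + α_k`. The modulus is `μ_β` because
`∂f_β(x) ⊆ ∂f(x) + βAᵀ(Ax - b)` and `‖A d‖ ≥ σ_min(A) ‖d‖`.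

The two updates also preserve `A x_k - b = θ_k (A x_0 - b + λ_k - λ_0)`, and the energy bounds
`‖λ_k - λ*‖` by `√(2E_0)`, which gives the feasibility rate. The KKT conditions make the Lagrangian
gap nonnegative, the energy bounds it above, and the feasibility rate turns the gap into the
objective rate.
-/

open Filter Topology Set
open scoped InnerProduct

section InnerProductSpace

variable {E F : Type*} [NormedAddCommGroup E] [InnerProductSpace ℝ E]
  [NormedAddCommGroup F] [InnerProductSpace ℝ F]

lemma two_mul_inner_sub_sub (a b c : E) :
    2 * ⟪a - b, b - c⟫ = ‖a - c‖ ^ 2 - ‖a - b‖ ^ 2 - ‖b - c‖ ^ 2 := by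
  rw [show a - c = (a - b) + (b - c) by abel, norm_add_sq_real]
  ring

/-- The paper's `L_β` without the indicator `δ_X`: the constraint `z ∈ X` is kept separately. -/
noncomputable def augLagrangian (f : E → ℝ) (A : E →L[ℝ] F) (b : F) (β : ℝ) (z : E) (w : F) : ℝ :=
  f z + β / 2 * ‖A z - b‖ ^ 2 + ⟪w, A z - b⟫

lemma augLagrangian_eq_of_apply_eq {f : E → ℝ} {A : E →L[ℝ] F} {b : F} {xs : E} (hAxs : A xs = b)
    (β : ℝ) (w : F) : augLagrangian f A b β xs w = f xs := by
  simp [augLagrangian, hAxs]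

lemma two_mul_inner_step_eq [CompleteSpace E] [CompleteSpace F] (A : E →L[ℝ] F) {b : F}
    {xs : E} (hAxs : A xs = b) (ls : F)
    {α θ γ c : ℝ} (hα : α ≠ 0) {x' v v' ξ : E} {l l' : F}
    (hdual : (θ / α) • (l' - l) = A v' - b)
    (hv : (γ / α) • (v' - v) = c • (x' - v') - (ξ + (A†) l')) :
    2 * α * ⟪ξ + (A†) ls, v' - xs⟫
      = α * c * (‖x' - xs‖ ^ 2 - ‖x' - v'‖ ^ 2 - ‖v' - xs‖ ^ 2)
        + γ * (‖v - xs‖ ^ 2 - ‖v - v'‖ ^ 2 - ‖v' - xs‖ ^ 2)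
        + θ * (‖l - ls‖ ^ 2 - ‖l' - ls‖ ^ 2 - ‖l' - l‖ ^ 2) := by
  have hv' : γ • (v' - v) = α • (c • (x' - v') - (ξ + (A†) l')) := by
    rw [← hv, smul_smul, mul_div_cancel₀ _ hα]
  have hv'' : α • (ξ + (A†) ls) = (α * c) • (x' - v') + γ • (v - v') + α • (A†) (ls - l') := by
    rw [map_sub]
    linear_combination (norm := module) hv'
  have hdual' : α • (A (v' - xs)) = θ • (l' - l) := by
    rw [map_sub, hAxs, ← hdual, smul_smul, mul_div_cancel₀ _ hα]
  have e1 := congrArg (⟪·, v' - xs⟫) hv''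
  have e2 := congrArg (⟪ls - l', ·⟫) hdual'
  simp only [inner_add_left, real_inner_smul_left, real_inner_smul_right,
    ContinuousLinearMap.adjoint_inner_left] at e1 e2
  have p1 := two_mul_inner_sub_sub x' v' xs
  have p2 := two_mul_inner_sub_sub v v' xs
  have p3 := two_mul_inner_sub_sub ls l' l
  rw [norm_sub_rev ls l, norm_sub_rev ls l'] at p3
  rw [inner_add_left, ContinuousLinearMap.adjoint_inner_left]
  linear_combination 2 * e1 + 2 * e2 + α * c * p1 + γ * p2 + θ * p3

lemma implicit_step_energy_le [CompleteSpace E] [CompleteSpace F] (A : E →L[ℝ] F) {b : F}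
    {xs : E} (hAxs : A xs = b) (ls : F) {α θ γ c θ' γ' P P' : ℝ}
    (hα : 0 < α) (hθ : 0 ≤ θ) (hγ : 0 ≤ γ) (hc : 0 ≤ c) {x x' v v' ξ : E} {l l' : F}
    (hP : P' + ⟪ξ + (A†) ls, x - x'⟫ + c / 2 * ‖x - x'‖ ^ 2 ≤ P)
    (hPs : P' + ⟪ξ + (A†) ls, xs - x'⟫ + c / 2 * ‖xs - x'‖ ^ 2 ≤ 0)
    (hprim : α⁻¹ • (x' - x) = v' - x')
    (hdual : (θ / α) • (l' - l) = A v' - b)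
    (hv : (γ / α) • (v' - v) = c • (x' - v') - (ξ + (A†) l'))
    (hθ' : θ' = θ / (1 + α)) (hγ' : γ' = (γ + c * α) / (1 + α)) :
    (1 + α) * (P' + γ' / 2 * ‖v' - xs‖ ^ 2 + θ' / 2 * ‖l' - ls‖ ^ 2)
      ≤ P + γ / 2 * ‖v - xs‖ ^ 2 + θ / 2 * ‖l - ls‖ ^ 2 := by
  set g := ξ + (A†) ls
  have hx : x - x' = α • (x' - v') := by
    rw [inv_smul_eq_iff₀ hα.ne'] at hprim
    rw [← neg_sub x' x, hprim, ← smul_neg, neg_sub]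
  have hinner : ⟪g, x - x'⟫ + α * ⟪g, xs - x'⟫ = -(α * ⟪g, v' - xs⟫) := by
    rw [hx, real_inner_smul_right, ← mul_add, ← inner_add_right, ← mul_neg, ← inner_neg_right]
    congr 2
    abel
  have hθ'α : (1 + α) * θ' = θ := by rw [hθ']; field_simp
  have hγ'α : (1 + α) * γ' = γ + c * α := by rw [hγ']; field_simp
  have hαPs := mul_le_mul_of_nonneg_left hPs hα.le
  have hidentity := two_mul_inner_step_eq A hAxs ls hα.ne' hdual hv
  rw [norm_sub_rev xs x'] at hαPs
  have n1 : 0 ≤ c / 2 * ‖x - x'‖ ^ 2 := by positivity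
  have n2 : 0 ≤ α * c * ‖x' - v'‖ ^ 2 := by positivity
  have n3 : 0 ≤ γ * ‖v - v'‖ ^ 2 := by positivity
  have n4 : 0 ≤ θ * ‖l' - l‖ ^ 2 := by positivity
  linear_combination hP + hαPs - hinner + hidentity / 2 + n1 + (n2 + n3 + n4) / 2
    + (‖v' - xs‖ ^ 2 / 2) * hγ'α + (‖l' - ls‖ ^ 2 / 2) * hθ'α

end InnerProductSpace

section Recursions

lemma eq_prod_inv_of_succ_eq_div {K : Type*} [Field K] {θ α : ℕ → K} (h0 : θ 0 = 1)
    (hθ : ∀ k, θ (k + 1) = θ k / (1 + α k)) (k : ℕ) :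
    θ k = ∏ i ∈ Finset.range k, (1 + α i)⁻¹ := by
  induction k with
  | zero => simpa using h0
  | succ k ih => rw [Finset.prod_range_succ, ← ih, hθ, div_eq_mul_inv]

lemma pos_of_succ_eq_add_mul_div {γ α : ℕ → ℝ} {c : ℝ} (hc : 0 ≤ c) (hα : ∀ k, 0 < α k)
    (h0 : 0 < γ 0) (hγ : ∀ k, γ (k + 1) = (γ k + c * α k) / (1 + α k)) (k : ℕ) : 0 < γ k := by
  induction k with
  | zero => exact h0
  | succ k ih => have := hα k; rw [hγ]; positivity

lemma le_mul_of_one_add_mul_succ_le {θ α e : ℕ → ℝ} (h0 : θ 0 = 1)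
    (hθ : ∀ k, θ (k + 1) = θ k / (1 + α k)) (hα : ∀ k, 0 < α k)
    (he : ∀ k, (1 + α k) * e (k + 1) ≤ e k) (k : ℕ) : e k ≤ θ k * e 0 := by
  induction k with
  | zero => rw [h0, one_mul]
  | succ k ih =>
    rw [hθ, div_mul_eq_mul_div, le_div_iff₀ (by linarith [hα k]), mul_comm]
    exact (he k).trans ih

lemma implicit_scheme_residual_eq {E F 𝓕 : Type*} [AddCommGroup E] [Module ℝ E]
    [AddCommGroup F] [Module ℝ F] [FunLike 𝓕 E F] [LinearMapClass 𝓕 ℝ E F] (A : 𝓕) (b : F)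
    {θ α : ℕ → ℝ} {x v : ℕ → E} {l : ℕ → F} (h0 : θ 0 = 1)
    (hθ : ∀ k, θ (k + 1) = θ k / (1 + α k)) (hα : ∀ k, 0 < α k)
    (hdual : ∀ k, (θ k / α k) • (l (k + 1) - l k) = A (v (k + 1)) - b)
    (hprim : ∀ k, (α k)⁻¹ • (x (k + 1) - x k) = v (k + 1) - x (k + 1)) (k : ℕ) :
    A (x k) - b = θ k • (A (x 0) - b + (l k - l 0)) := by
  induction k with
  | zero => rw [h0, sub_self, add_zero, one_smul]
  | succ k ih =>
    have hα0 := (hα k).ne'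
    have hα1 : 1 + α k ≠ 0 := by linarith [hα k]
    have hx : x (k + 1) - x k = α k • (v (k + 1) - x (k + 1)) :=
      (inv_smul_eq_iff₀ hα0).mp (hprim k)
    have hv : α k • (A (v (k + 1)) - b) = θ k • (l (k + 1) - l k) := by
      rw [← hdual k, smul_smul, mul_div_cancel₀ _ hα0]
    have hθk : θ k = (1 + α k) * θ (k + 1) := by rw [hθ, mul_div_cancel₀ _ hα1]
    have hAx := congrArg A hx
    simp only [map_sub, map_smul] at hAx
    rw [← smul_right_inj hα1, smul_smul, ← hθk]
    linear_combination (norm := module) hAx + hv + ih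

end Recursions

section Euclidean

variable {n m : ℕ}

lemma sigmaMin_nonneg (A : EuclideanSpace ℝ (Fin n) →L[ℝ] EuclideanSpace ℝ (Fin m)) :
    0 ≤ sigmaMin A :=
  Real.sInf_nonneg (by rintro c ⟨x, -, rfl⟩; exact norm_nonneg _)

lemma sigmaMin_mul_norm_le (A : EuclideanSpace ℝ (Fin n) →L[ℝ] EuclideanSpace ℝ (Fin m))
    (d : EuclideanSpace ℝ (Fin n)) : sigmaMin A * ‖d‖ ≤ ‖A d‖ := by
  rcases eq_or_ne d 0 with rfl | hd
  · simp
  have hd' : 0 < ‖d‖ := norm_pos_iff.mpr hd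
  have h : sigmaMin A ≤ ‖A (‖d‖⁻¹ • d)‖ :=
    csInf_le ⟨0, by rintro c ⟨x, -, rfl⟩; exact norm_nonneg _⟩
      ⟨_, by simp [norm_smul, hd'.ne'], rfl⟩
  rwa [map_smul, norm_smul, norm_inv, norm_norm, inv_mul_eq_div, le_div_iff₀ hd'] at h

lemma sub_smul_adjoint_mem_subdiff {f : EuclideanSpace ℝ (Fin n) → ℝ}
    (hf : ConvexOn ℝ univ f) (A : EuclideanSpace ℝ (Fin n) →L[ℝ] EuclideanSpace ℝ (Fin m))
    (b : EuclideanSpace ℝ (Fin m)) {β : ℝ} {x p : EuclideanSpace ℝ (Fin n)}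
    (hp : p ∈ subdiff (fun z ↦ f z + β / 2 * ‖A z - b‖ ^ 2) x) :
    p - β • (A†) (A x - b) ∈ subdiff f x := by
  intro y
  set d := y - x
  set C := β / 2 * ‖A d‖ ^ 2
  -- Differentiate along `x + t • d`: after dividing by `t`, the quadratic term is `t * C → 0`.
  suffices key : ∀ t ∈ Ioo (0 : ℝ) 1, ⟪p, d⟫ - β * ⟪A x - b, A d⟫ ≤ f y - f x + t * C by
    have hlim : Tendsto (fun t : ℝ ↦ f y - f x + t * C) (𝓝[>] 0) (𝓝 (f y - f x)) := by
      simpa using ((tendsto_id.mul_const C).const_add (f y - f x)).mono_left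
        (nhdsWithin_le_nhds (a := (0 : ℝ)))
    have := ge_of_tendsto hlim (eventually_of_mem (Ioo_mem_nhdsGT one_pos) key)
    rw [inner_sub_left, real_inner_smul_left, ContinuousLinearMap.adjoint_inner_left]
    linarith
  rintro t ⟨ht0, ht1⟩
  have hsub := hp (x + t • d)
  have hconv : f (x + t • d) ≤ (1 - t) * f x + t * f y := by
    have h := hf.2 (mem_univ x) (mem_univ y) (sub_nonneg.mpr ht1.le) ht0.le (by ring)
    rwa [show (1 - t) • x + t • y = x + t • d by simp only [d, smul_sub, sub_smul, one_smul]; abel]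
      at h
  have hsq : ‖A (x + t • d) - b‖ ^ 2
      = ‖A x - b‖ ^ 2 + 2 * t * ⟪A x - b, A d⟫ + t ^ 2 * ‖A d‖ ^ 2 := by
    rw [map_add, map_smul, add_sub_right_comm, norm_add_sq_real, real_inner_smul_right,
      norm_smul, Real.norm_eq_abs, mul_pow, sq_abs]
    ring
  beta_reduce at hsub
  rw [add_sub_cancel_left, real_inner_smul_right, hsq] at hsub
  have : t * (⟪p, d⟫ - β * ⟪A x - b, A d⟫) ≤ t * (f y - f x + t * C) := by
    linear_combination hsub + hconv
  exact le_of_mul_le_mul_left this ht0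

lemma augLagrangian_strong_subgradient {X : Set (EuclideanSpace ℝ (Fin n))}
    {f : EuclideanSpace ℝ (Fin n) → ℝ} (hf : ConvexOn ℝ univ f) {μ : ℝ}
    (hsc : ∀ x ∈ X, ∀ y ∈ X, ∀ p ∈ subdiff f x,
      f x + ⟪p, y - x⟫ + μ / 2 * ‖y - x‖ ^ 2 ≤ f y)
    (A : EuclideanSpace ℝ (Fin n) →L[ℝ] EuclideanSpace ℝ (Fin m)) (b : EuclideanSpace ℝ (Fin m))
    {β : ℝ} (hβ : 0 ≤ β) (w : EuclideanSpace ℝ (Fin m)) {x p q y : EuclideanSpace ℝ (Fin n)}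
    (hp : p ∈ subdiff (fun z ↦ f z + β / 2 * ‖A z - b‖ ^ 2) x) (hq : q ∈ normalCone X x)
    (hy : y ∈ X) :
    augLagrangian f A b β x w + ⟪p + q + (A†) w, y - x⟫
        + (μ + β * sigmaMin A ^ 2) / 2 * ‖y - x‖ ^ 2
      ≤ augLagrangian f A b β y w := by
  have hsub := hsc x hq.1 y hy _ (sub_smul_adjoint_mem_subdiff hf A b hp)
  rw [inner_sub_left, real_inner_smul_left, ContinuousLinearMap.adjoint_inner_left] at hsub
  have hnormal := hq.2 y hy
  have hσ : β * (sigmaMin A ^ 2 * ‖y - x‖ ^ 2) ≤ β * ‖A (y - x)‖ ^ 2 := by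
    rw [← mul_pow]
    gcongr
    exacts [mul_nonneg (sigmaMin_nonneg A) (norm_nonneg _), sigmaMin_mul_norm_le A _]
  have hsq : ‖A y - b‖ ^ 2 = ‖A x - b‖ ^ 2 + 2 * ⟪A x - b, A (y - x)⟫ + ‖A (y - x)‖ ^ 2 := by
    rw [← norm_add_sq_real, map_sub]
    congr 2
    abel
  have hw : ⟪w, A y - b⟫ = ⟪w, A x - b⟫ + ⟪w, A (y - x)⟫ := by
    rw [← inner_add_right, map_sub]
    congr 1
    abel
  simp only [augLagrangian, inner_add_left, ContinuousLinearMap.adjoint_inner_left, hsq, hw]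
  linarith

lemma le_add_inner_of_kkt {X : Set (EuclideanSpace ℝ (Fin n))}
    {f : EuclideanSpace ℝ (Fin n) → ℝ}
    {A : EuclideanSpace ℝ (Fin n) →L[ℝ] EuclideanSpace ℝ (Fin m)} {b : EuclideanSpace ℝ (Fin m)}
    {xs ps qs z : EuclideanSpace ℝ (Fin n)} {ls : EuclideanSpace ℝ (Fin m)}
    (hps : ps ∈ subdiff f xs) (hqs : qs ∈ normalCone X xs) (hKKT : ps + qs + (A†) ls = 0)
    (hAxs : A xs = b) (hz : z ∈ X) :
    f xs ≤ f z + ⟪ls, A z - b⟫ := by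
  have h := congrArg (⟪·, z - xs⟫) hKKT
  simp only [inner_add_left, ContinuousLinearMap.adjoint_inner_left, map_sub, hAxs,
    inner_zero_left] at h
  linarith [hps z, hqs.2 z hz]

lemma augLagrangian_implicit_step_energy_le {X : Set (EuclideanSpace ℝ (Fin n))}
    {f : EuclideanSpace ℝ (Fin n) → ℝ} (hf : ConvexOn ℝ univ f) {μ : ℝ} (hμ : 0 ≤ μ)
    (hsc : ∀ x ∈ X, ∀ y ∈ X, ∀ p ∈ subdiff f x,
      f x + ⟪p, y - x⟫ + μ / 2 * ‖y - x‖ ^ 2 ≤ f y)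
    (A : EuclideanSpace ℝ (Fin n) →L[ℝ] EuclideanSpace ℝ (Fin m)) (b : EuclideanSpace ℝ (Fin m))
    {β : ℝ} (hβ : 0 ≤ β) {xs : EuclideanSpace ℝ (Fin n)} {ls : EuclideanSpace ℝ (Fin m)}
    (hxs : xs ∈ X) (hAxs : A xs = b) {α θ γ θ' γ' : ℝ} (hα : 0 < α) (hθ : 0 ≤ θ) (hγ : 0 ≤ γ)
    {x x' v v' ξ : EuclideanSpace ℝ (Fin n)} {l l' : EuclideanSpace ℝ (Fin m)} (hx : x ∈ X)
    (hξ : ξ ∈ subdiff (fun z ↦ f z + β / 2 * ‖A z - b‖ ^ 2) x' + normalCone X x')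
    (hprim : α⁻¹ • (x' - x) = v' - x')
    (hdual : (θ / α) • (l' - l) = A v' - b)
    (hv : (γ / α) • (v' - v) = (μ + β * sigmaMin A ^ 2) • (x' - v') - (ξ + (A†) l'))
    (hθ' : θ' = θ / (1 + α)) (hγ' : γ' = (γ + (μ + β * sigmaMin A ^ 2) * α) / (1 + α)) :
    (1 + α) * (augLagrangian f A b β x' ls - f xs + γ' / 2 * ‖v' - xs‖ ^ 2
        + θ' / 2 * ‖l' - ls‖ ^ 2)
      ≤ augLagrangian f A b β x ls - f xs + γ / 2 * ‖v - xs‖ ^ 2 + θ / 2 * ‖l - ls‖ ^ 2 := by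
  obtain ⟨p, hp, q, hq, rfl⟩ := hξ
  have hsg (y) (hy : y ∈ X) := augLagrangian_strong_subgradient hf hsc A b hβ ls hp hq hy
  refine implicit_step_energy_le A hAxs ls hα hθ hγ (by positivity) ?_ ?_ hprim hdual hv hθ' hγ'
  · linarith [hsg x hx]
  · linarith [hsg xs hxs, augLagrangian_eq_of_apply_eq (f := f) hAxs β ls]

lemma mem_of_mem_add_normalCone {X S : Set (EuclideanSpace ℝ (Fin n))}
    {x ξ : EuclideanSpace ℝ (Fin n)} (h : ξ ∈ S + normalCone X x) : x ∈ X := by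
  obtain ⟨_, _, _, hq, -⟩ := h
  exact hq.1

end Euclidean

section Bounds

variable {F : Type*} [NormedAddCommGroup F] [InnerProductSpace ℝ F]

lemma norm_le_mul_of_eq_smul {r r₀ l l₀ ls : F} {θ e : ℝ} (hθ : 0 < θ)
    (hr : r = θ • (r₀ + (l - l₀))) (hl : θ / 2 * ‖l - ls‖ ^ 2 ≤ θ * e) :
    ‖r‖ ≤ θ * (√(2 * e) + ‖l₀ - ls‖ + ‖r₀‖) := by
  have hl' : ‖l - ls‖ ≤ √(2 * e) := by
    have : ‖l - ls‖ ^ 2 ≤ 2 * e := by nlinarith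
    simpa using Real.abs_le_sqrt this
  have htri : ‖r₀ + (l - l₀)‖ ≤ ‖r₀‖ + (‖l - ls‖ + ‖l₀ - ls‖) :=
    calc ‖r₀ + (l - l₀)‖ = ‖r₀ + ((l - ls) - (l₀ - ls))‖ := by rw [sub_sub_sub_cancel_right]
      _ ≤ ‖r₀‖ + (‖l - ls‖ + ‖l₀ - ls‖) :=
        (norm_add_le _ _).trans (by gcongr; exact norm_sub_le _ _)
  rw [hr, norm_smul, Real.norm_of_nonneg hθ.le]
  gcongr
  linarith

lemma abs_sub_le_of_gap {a a' e ρ : ℝ} {ls r : F} (h₀ : a' ≤ a + ⟪ls, r⟫)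
    (h₁ : a + ⟪ls, r⟫ - a' ≤ e) (hr : ‖r‖ ≤ ρ) : |a - a'| ≤ e + ρ * ‖ls‖ := by
  have hinner : |⟪ls, r⟫| ≤ ρ * ‖ls‖ := (abs_real_inner_le_norm ls r).trans <| by
    rw [mul_comm]
    exact mul_le_mul_of_nonneg_right hr (norm_nonneg ls)
  rw [abs_le] at hinner ⊢
  constructor <;> linarith

end Bounds

theorem implicit_scheme_rates_general {n m : ℕ}
    (X : Set (EuclideanSpace ℝ (Fin n)))
    (f : EuclideanSpace ℝ (Fin n) → ℝ)
    (hfcv : ConvexOn ℝ Set.univ f)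
    (A : EuclideanSpace ℝ (Fin n) →L[ℝ] EuclideanSpace ℝ (Fin m))
    (b : EuclideanSpace ℝ (Fin m))
    (μ β μβ : ℝ) (hμ : 0 ≤ μ) (hβ : 0 ≤ β)
    (hμβ : μβ = μ + β * sigmaMin A ^ 2)
    (hsc : ∀ x ∈ X, ∀ y ∈ X, ∀ p ∈ subdiff f x,
      f x + ⟪p, y - x⟫ + μ / 2 * ‖y - x‖ ^ 2 ≤ f y)
    (fβ : EuclideanSpace ℝ (Fin n) → ℝ)
    (hfβ : ∀ z, fβ z = f z + β / 2 * ‖A z - b‖ ^ 2)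
    (Lβ : EuclideanSpace ℝ (Fin n) → EuclideanSpace ℝ (Fin m) → ℝ)
    (hLβ : ∀ z w, Lβ z w = fβ z + ⟪w, A z - b⟫)
    (xs : EuclideanSpace ℝ (Fin n)) (ls : EuclideanSpace ℝ (Fin m))
    (hxs : xs ∈ X) (hKKT1 : A xs = b)
    (hKKT2 : ∃ p ∈ subdiff f xs, ∃ q ∈ normalCone X xs,
      p + q + (ContinuousLinearMap.adjoint A) ls = 0)
    (θ γ α : ℕ → ℝ)
    (hα : ∀ k, 0 < α k) (hθ0 : θ 0 = 1) (hγ0 : 0 < γ 0)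
    (hθ : ∀ k, θ (k + 1) = θ k / (1 + α k))
    (hγ : ∀ k, γ (k + 1) = (γ k + μβ * α k) / (1 + α k))
    (lam : ℕ → EuclideanSpace ℝ (Fin m))
    (x v : ℕ → EuclideanSpace ℝ (Fin n))
    (hx0 : x 0 ∈ X)
    (hdual : ∀ k, (θ k / α k) • (lam (k + 1) - lam k) = A (v (k + 1)) - b)
    (hprim : ∀ k, (α k)⁻¹ • (x (k + 1) - x k) = v (k + 1) - x (k + 1))
    (hvup : ∀ k, ∃ ξ ∈ subdiff fβ (x (k + 1)) + normalCone X (x (k + 1)),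
      (γ k / α k) • (v (k + 1) - v k) =
        μβ • (x (k + 1) - v (k + 1)) -
          (ξ + (ContinuousLinearMap.adjoint A) (lam (k + 1))))
    (Ef : ℕ → ℝ)
    (hEf : ∀ k, Ef k = Lβ (x k) ls - Lβ xs (lam k)
      + γ k / 2 * ‖v k - xs‖ ^ 2 + θ k / 2 * ‖lam k - ls‖ ^ 2)
    (Lag : EuclideanSpace ℝ (Fin n) → EuclideanSpace ℝ (Fin m) → ℝ)
    (hLag : ∀ z w, Lag z w = f z + ⟪w, A z - b⟫)
    (R₀ : ℝ)
    (hR₀ : R₀ = Real.sqrt (2 * Ef 0) + ‖lam 0 - ls‖ + ‖A (x 0) - b‖) :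
    ∀ k, θ k = (∏ i ∈ Finset.range k, (1 + α i)⁻¹) ∧
      ‖A (x k) - b‖ ≤ θ k * R₀ ∧
      (0 ≤ Lag (x k) ls - Lag xs (lam k) ∧
        Lag (x k) ls - Lag xs (lam k) ≤ θ k * Ef 0) ∧
      |f (x k) - f xs| ≤ θ k * (Ef 0 + R₀ * ‖ls‖) := by
  subst hμβ
  obtain rfl : fβ = _ := funext hfβ
  obtain ⟨ps, hps, qs, hqs, hKKT⟩ := hKKT2
  have hθpos := pos_of_succ_eq_add_mul_div le_rfl hα (hθ0 ▸ one_pos) fun k ↦ by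
    rw [hθ, zero_mul, add_zero]
  have hγpos := pos_of_succ_eq_add_mul_div (by positivity) hα hγ0 hγ
  have hxX : ∀ k, x k ∈ X
    | 0 => hx0
    | k + 1 => mem_of_mem_add_normalCone (hvup k).choose_spec.1
  have hE (k : ℕ) : Ef k = augLagrangian f A b β (x k) ls - f xs
      + γ k / 2 * ‖v k - xs‖ ^ 2 + θ k / 2 * ‖lam k - ls‖ ^ 2 := by
    simp [hEf, hLβ, augLagrangian, hKKT1]
  have hdecay := le_mul_of_one_add_mul_succ_le (e := Ef) hθ0 hθ hα fun k ↦ by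
    obtain ⟨ξ, hξ, hv⟩ := hvup k
    rw [hE, hE]
    exact augLagrangian_implicit_step_energy_le hfcv hμ hsc A b hβ hxs hKKT1 (hα k) (hθpos k).le
      (hγpos k).le (hxX k) hξ (hprim k) (hdual k) hv (hθ k) (hγ k)
  intro k
  have hgap := le_add_inner_of_kkt hps hqs hKKT hKKT1 (hxX k)
  have hEk := hdecay k
  rw [hE, augLagrangian] at hEk
  have : 0 ≤ γ k / 2 * ‖v k - xs‖ ^ 2 := by have := hγpos k; positivity
  have : 0 ≤ θ k / 2 * ‖lam k - ls‖ ^ 2 := by have := hθpos k; positivity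
  have : 0 ≤ β / 2 * ‖A (x k) - b‖ ^ 2 := by positivity
  have hgap_le : f (x k) + ⟪ls, A (x k) - b⟫ - f xs ≤ θ k * Ef 0 := by linarith
  have hres : ‖A (x k) - b‖ ≤ θ k * R₀ := hR₀ ▸ norm_le_mul_of_eq_smul (hθpos k)
    (implicit_scheme_residual_eq A b hθ0 hθ hα hdual hprim k) (by linarith)
  simp only [hLag, hKKT1, sub_self, inner_zero_right, add_zero]
  exact ⟨eq_prod_inv_of_succ_eq_div hθ0 hθ k, hres, ⟨by linarith, by linarith⟩,
    (abs_sub_le_of_gap hgap hgap_le hres).trans_eq (by ring)⟩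

/-- Theorem 3.1 (rate part): nonergodic convergence rates for the fully implicit scheme. -/
theorem implicit_scheme_rates {n m : ℕ}
    (X : Set (EuclideanSpace ℝ (Fin n)))
    (hXne : X.Nonempty) (hXcl : IsClosed X) (hXcv : Convex ℝ X)
    (f : EuclideanSpace ℝ (Fin n) → ℝ)
    (hfcv : ConvexOn ℝ Set.univ f)
    (A : EuclideanSpace ℝ (Fin n) →L[ℝ] EuclideanSpace ℝ (Fin m))
    (b : EuclideanSpace ℝ (Fin m))
    (μ β μβ : ℝ) (hμ : 0 ≤ μ) (hβ : 0 ≤ β)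
    (hμβ : μβ = μ + β * sigmaMin A ^ 2)
    (hsc : ∀ x ∈ X, ∀ y ∈ X, ∀ p ∈ subdiff f x,
      f x + ⟪p, y - x⟫ + μ / 2 * ‖y - x‖ ^ 2 ≤ f y)
    (fβ : EuclideanSpace ℝ (Fin n) → ℝ)
    (hfβ : ∀ z, fβ z = f z + β / 2 * ‖A z - b‖ ^ 2)
    (Lβ : EuclideanSpace ℝ (Fin n) → EuclideanSpace ℝ (Fin m) → ℝ)
    (hLβ : ∀ z w, Lβ z w = fβ z + ⟪w, A z - b⟫)
    (xs : EuclideanSpace ℝ (Fin n)) (ls : EuclideanSpace ℝ (Fin m))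
    (hxs : xs ∈ X) (hKKT1 : A xs = b)
    (hKKT2 : ∃ p ∈ subdiff f xs, ∃ q ∈ normalCone X xs,
      p + q + (ContinuousLinearMap.adjoint A) ls = 0)
    (θ γ α : ℕ → ℝ)
    (hα : ∀ k, 0 < α k) (hθ0 : θ 0 = 1) (hγ0 : 0 < γ 0)
    (hθ : ∀ k, θ (k + 1) = θ k / (1 + α k))
    (hγ : ∀ k, γ (k + 1) = (γ k + μβ * α k) / (1 + α k))
    (lam : ℕ → EuclideanSpace ℝ (Fin m))
    (x v : ℕ → EuclideanSpace ℝ (Fin n))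
    (hx0 : x 0 ∈ X)
    (hdual : ∀ k, (θ k / α k) • (lam (k + 1) - lam k) = A (v (k + 1)) - b)
    (hprim : ∀ k, (α k)⁻¹ • (x (k + 1) - x k) = v (k + 1) - x (k + 1))
    (hvup : ∀ k, ∃ ξ ∈ subdiff fβ (x (k + 1)) + normalCone X (x (k + 1)),
      (γ k / α k) • (v (k + 1) - v k) =
        μβ • (x (k + 1) - v (k + 1)) -
          (ξ + (ContinuousLinearMap.adjoint A) (lam (k + 1))))
    (Ef : ℕ → ℝ)
    (hEf : ∀ k, Ef k = Lβ (x k) ls - Lβ xs (lam k)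
      + γ k / 2 * ‖v k - xs‖ ^ 2 + θ k / 2 * ‖lam k - ls‖ ^ 2)
    (Lag : EuclideanSpace ℝ (Fin n) → EuclideanSpace ℝ (Fin m) → ℝ)
    (hLag : ∀ z w, Lag z w = f z + ⟪w, A z - b⟫)
    (R₀ : ℝ)
    (hR₀ : R₀ = Real.sqrt (2 * Ef 0) + ‖lam 0 - ls‖ + ‖A (x 0) - b‖) :
    ∀ k, θ k = (∏ i ∈ Finset.range k, (1 + α i)⁻¹) ∧
      ‖A (x k) - b‖ ≤ θ k * R₀ ∧
      (0 ≤ Lag (x k) ls - Lag xs (lam k) ∧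
        Lag (x k) ls - Lag xs (lam k) ≤ θ k * Ef 0) ∧
      |f (x k) - f xs| ≤ θ k * (Ef 0 + R₀ * ‖ls‖) :=
  implicit_scheme_rates_general X f hfcv A b μ β μβ hμ hβ hμβ hsc fβ hfβ Lβ hLβ xs ls hxs hKKT1
    hKKT2 θ γ α hα hθ0 hγ0 hθ hγ lam x v hx0 hdual hprim hvup Ef hEf Lag hLag R₀ hR₀
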